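/- Let T be a tournament, P = u₀u₁…u_{p−1} a non-extendable path in T with p ≥ 4, and suppose there exists a vertex w ∉ V(P) and an index k with 1 ≤ k ≤ p−3 such that u_j → w for all k+1 ≤ j ≤ p−2 and w → u_i for all 1 ≤ i ≤ k (i.e., the subpath u₁…u_{p−2} has a hybrid vertex). Then the number h(P) of hybrid vertices of P satisfies h(P) ≤ i(T) + 2. -/

import Mathlib

open Finset

variable {V : Type*} [Fintype V] [DecidableEq V]

/-- A tournament: irreflexive, and between any two distinct vertices exactly one arc. -/
def IsTournament (r : V → V → Prop) : Prop :=
  (∀ u, ¬ r u u) ∧ ∀ u v : V, u ≠ v → Xor' (r u v) (r v u)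

/-- Out-degree. -/
def outDeg (r : V → V → Prop) [DecidableRel r] (u : V) : ℕ :=
  (Finset.univ.filter fun v => r u v).card

/-- In-degree. -/
def inDeg (r : V → V → Prop) [DecidableRel r] (u : V) : ℕ :=
  (Finset.univ.filter fun v => r v u).card

/-- Number of directed 2-paths from `u` to `v`. -/
def p2 (r : V → V → Prop) [DecidableRel r] (u v : V) : ℕ :=
  (Finset.univ.filter fun w => r u w ∧ r w v).card

/-- `π` is the minimum of `p2` over ordered pairs of distinct vertices. -/
def IsPi2 (r : V → V → Prop) [DecidableRel r] (π : ℕ) : Prop :=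
  (∀ x y : V, x ≠ y → π ≤ p2 r x y) ∧ ∃ x y : V, x ≠ y ∧ p2 r x y = π

/-- `i` is the irregularity: the maximum of |d⁺(u) − d⁻(u)|. -/
def IsIrreg (r : V → V → Prop) [DecidableRel r] (i : ℕ) : Prop :=
  (∀ u : V, ((outDeg r u : ℤ) - inDeg r u).natAbs ≤ i) ∧
    ∃ u : V, ((outDeg r u : ℤ) - inDeg r u).natAbs = i

/-- A directed path, as a duplicate-free list whose consecutive members are arcs. -/
def IsDirPath (r : V → V → Prop) (l : List V) : Prop :=
  l.Nodup ∧ l.Chain' r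

/-- A path is extendable if some path with the same endpoints uses its vertices plus one more. -/
def Extendable (r : V → V → Prop) (l : List V) : Prop :=
  ∃ w ∉ l.toFinset, ∃ l' : List V, IsDirPath r l' ∧ l'.head? = l.head? ∧
    l'.getLast? = l.getLast? ∧ l'.toFinset = insert w l.toFinset

/-- Every nonhamiltonian path (on at least two vertices) is extendable. -/
def PathExtendable (r : V → V → Prop) : Prop :=
  ∀ l : List V, IsDirPath r l → 2 ≤ l.length →
    l.toFinset ≠ Finset.univ → Extendable r l


/-!
Let `a` and `z` be the ends of `P`. Since `P` is non-extendable, an outside vertex that dominates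
some vertex of `P` dominates `a` (otherwise it could be inserted before the first vertex of `P` it
dominates), and dually an outside vertex dominated by some vertex of `P` is dominated by `z`. Hence
in `(d⁻(a) - d⁺(a)) + (d⁺(z) - d⁻(z))` every hybrid vertex counts `2` and the other outside vertices
count `0` net. On `P` itself, an index `1 ≤ j ≤ p - 3` with `a → u_{j+1}` and `u_j → z` would give
the longer path `a u_{j+1} … u_{p-2} w u_1 … u_j z`, so `d⁺_P(a) + d⁻_P(z) ≤ p + 1` and the vertices
of `P` count at least `-4`. Both differences are at most `i(T)`, so `2 h(P) - 4 ≤ 2 i(T)`.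
-/

open Function

namespace IsTournament

variable {α : Type*} {r : α → α → Prop}

theorem asymm (hT : IsTournament r) {x y : α} (h : r x y) : ¬ r y x := by
  rcases eq_or_ne x y with rfl | hxy
  · exact hT.1 x
  · exact (hT.2 x y hxy).elim (·.2) fun h' => absurd h h'.2

theorem rel_of_not_rel (hT : IsTournament r) {x y : α} (hxy : x ≠ y) (h : ¬ r x y) : r y x :=
  (hT.2 x y hxy).elim (fun h' => absurd h'.1 h) (·.1)

protected theorem flip (hT : IsTournament r) : IsTournament (flip r) :=
  ⟨hT.1, fun u v huv => hT.2 v u huv.symm⟩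

theorem card_filter_rel_add_card_filter_rel {ι : Type*} [Fintype ι] [DecidableRel r]
    (hT : IsTournament r) {u : ι → α} (hu : Injective u) (q₀ : ι) :
    #{q | r (u q) (u q₀)} + #{q | r (u q₀) (u q)} = Fintype.card ι - 1 := by
  classical
  rw [← card_union_of_disjoint (disjoint_filter.2 fun q _ h => hT.asymm h),
    ← card_univ, ← card_erase_of_mem (mem_univ q₀)]
  congr 1
  ext q
  simp only [mem_union, mem_filter, mem_univ, true_and, mem_erase, and_true]
  constructor
  · rintro (h | h) rfl <;> exact hT.1 _ h
  · intro hq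
    by_cases h : r (u q) (u q₀)
    · exact Or.inl h
    · exact Or.inr (hT.rel_of_not_rel (hu.ne hq) h)

theorem rel_head_of_forall_infix (hT : IsTournament r) {x a y : α} {t : List α}
    (hx : x ∉ a :: t) (hins : ∀ u v, [u, v] <:+: a :: t → r u x → ¬ r x v)
    (hy : y ∈ a :: t) (hxy : r x y) : r x a := by
  induction t generalizing a with
  | nil => rwa [List.mem_singleton.1 hy] at hxy
  | cons b t ih =>
    by_contra hxa
    have hax : r a x := hT.rel_of_not_rel (fun h => hx (h ▸ List.mem_cons_self)) hxa
    have hy' : y ∈ b :: t := (List.mem_cons.1 hy).resolve_left (by rintro rfl; exact hxa hxy)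
    have hxb : r x b := ih (fun h => hx (List.mem_cons_of_mem a h))
      (fun u v huv => hins u v (huv.trans (List.suffix_cons a _).isInfix)) hy'
    exact hins a b (List.prefix_append [a, b] t).isInfix hax hxb

end IsTournament

section Extension

theorem IsDirPath.isChain {α : Type*} {r : α → α → Prop} {l : List α} (hl : IsDirPath r l) :
    l.IsChain r :=
  hl.2

variable {α : Type*} [DecidableEq α] {r : α → α → Prop} {l : List α} {w : α}

theorem extendable_of_perm {l' : List α} (hl : l.Nodup) (hw : w ∉ l)
    (hperm : l'.Perm (w :: l)) (hchain : l'.IsChain r) (hhead : l'.head? = l.head?)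
    (hlast : l'.getLast? = l.getLast?) : Extendable r l :=
  ⟨w, by simpa using hw, l', ⟨hperm.nodup_iff.2 (hl.cons hw), hchain⟩, hhead, hlast,
    by rw [List.toFinset_eq_of_perm _ _ hperm, List.toFinset_cons]⟩

theorem extendable_of_infix {u v : α} (hl : IsDirPath r l) (hw : w ∉ l) (huv : [u, v] <:+: l)
    (hu : r u w) (hv : r w v) : Extendable r l := by
  obtain ⟨s, t, rfl⟩ := huv
  have hchain : (s ++ u :: v :: t).IsChain r := by
    simpa only [List.append_assoc, List.cons_append, List.nil_append] using hl.isChain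
  refine extendable_of_perm (l' := s ++ u :: w :: v :: t) hl.1 hw
    (by simpa using List.perm_middle (l₁ := s ++ [u]) (l₂ := v :: t) (a := w)) ?_
    (by cases s <;> simp) (by simp [List.getLast?_append])
  rw [List.isChain_split] at hchain ⊢
  exact ⟨hchain.1, List.isChain_cons_cons.2 ⟨hu, List.isChain_cons_cons.2
    ⟨hv, (List.isChain_cons_cons.1 hchain.2).2⟩⟩⟩

/-- The path `a s m z` is extended by the path `a m w s z`. -/
theorem extendable_of_swap {a z s₁ s₂ m₁ m₂ : α} {s m : List α}
    (hl : IsDirPath r (a :: (s ++ m ++ [z]))) (hw : w ∉ a :: (s ++ m ++ [z]))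
    (hs₁ : s.head? = some s₁) (hs₂ : s.getLast? = some s₂)
    (hm₁ : m.head? = some m₁) (hm₂ : m.getLast? = some m₂)
    (ham : r a m₁) (hmw : r m₂ w) (hws : r w s₁) (hsz : r s₂ z) :
    Extendable r (a :: (s ++ m ++ [z])) := by
  have hs : s.IsChain r := hl.isChain.infix ⟨[a], m ++ [z], by simp⟩
  have hm : m.IsChain r := hl.isChain.infix ⟨a :: s, [z], by simp⟩
  refine extendable_of_perm (l' := a :: (m ++ w :: (s ++ [z]))) hl.1 hw ?_ ?_ rfl ?_
  · rw [← Multiset.coe_eq_coe]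
    simp only [← Multiset.cons_coe, ← Multiset.coe_add, ← Multiset.singleton_add]
    abel
  · simp [List.isChain_cons, List.isChain_append, List.head?_append, *]
  · simp only [← List.cons_append, ← List.append_assoc, List.getLast?_concat]

theorem extendable_of_cross (hl : IsDirPath r l) (hw : w ∉ l) {j : ℕ} (hj : 0 < j)
    (hjl : j + 3 ≤ l.length)
    (hw₁ : r w (l[1]'(by omega))) (hw₂ : r (l[l.length - 2]'(by omega)) w)
    (hhead : r (l[0]'(by omega)) (l[j + 1]'(by omega)))
    (hlast : r (l[j]'(by omega)) (l[l.length - 1]'(by omega))) : Extendable r l := by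
  obtain _ | ⟨a, t⟩ := l
  · simp at hjl
  obtain ⟨i, rfl⟩ : ∃ i, j = i + 1 := ⟨j - 1, by omega⟩
  simp only [List.length_cons] at hjl hw₂ hlast
  simp only [Nat.add_sub_cancel, show t.length + 1 - 2 = t.length - 2 + 1 by omega,
    List.getElem_cons_succ, List.getElem_cons_zero] at hw₁ hw₂ hhead hlast
  rw [List.getElem_cons, dif_neg (by omega)] at hlast
  have ht : t = t.take (i + 1) ++ (t.take (t.length - 1)).drop (i + 1) ++ [t[t.length - 1]] := by
    rw [show t.take (i + 1) = (t.take (t.length - 1)).take (i + 1) by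
      rw [List.take_take, min_eq_left (by omega)], List.take_append_drop, List.take_append_getElem,
      Nat.sub_add_cancel (by omega), List.take_length]
  rw [ht] at hl hw ⊢
  refine extendable_of_swap hl hw ?_ ?_ ?_ ?_ hhead hw₂ hw₁ hlast
  · rw [List.head?_take, if_neg (by omega), List.head?_eq_getElem?, List.getElem?_eq_getElem]
  · simp [List.getLast?_take]
  · rw [List.head?_drop, List.getElem?_take_of_lt (by omega), List.getElem?_eq_getElem]
  · rw [List.getLast?_drop, if_neg (by simp; omega), List.getLast?_take, if_neg (by omega),
      List.getElem?_eq_getElem (by omega)]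
    simp only [Option.some_or]
    congr 2

end Extension

section NonExtendable

variable {α : Type*} [DecidableEq α] {r : α → α → Prop} {l : List α} {x y a z : α}

theorem rel_head_of_not_extendable (hT : IsTournament r) (hl : IsDirPath r l)
    (hne : ¬ Extendable r l) (ha : l.head? = some a) (hx : x ∉ l) (hy : y ∈ l)
    (hxy : r x y) : r x a := by
  obtain ⟨t, rfl⟩ := List.head?_eq_some_iff.1 ha
  exact hT.rel_head_of_forall_infix hx
    (fun u v huv hu hv => hne (extendable_of_infix hl hx huv hu hv)) hy hxy

theorem rel_last_of_not_extendable (hT : IsTournament r) (hl : IsDirPath r l)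
    (hne : ¬ Extendable r l) (hz : l.getLast? = some z) (hx : x ∉ l) (hy : y ∈ l)
    (hyx : r y x) : r z x := by
  obtain ⟨s, rfl⟩ := List.getLast?_eq_some_iff.1 hz
  have hrev : (s ++ [z]).reverse = z :: s.reverse := by simp
  refine hT.flip.rel_head_of_forall_infix (t := s.reverse) (y := y) (by simpa [or_comm] using hx)
    (fun u v huv hu hv => hne (extendable_of_infix hl hx ?_ hv hu)) (by simpa [or_comm] using hy)
    hyx
  exact List.reverse_infix.1 (by rw [hrev]; exact huv)

variable [Fintype α] [DecidableRel r]

def hybrids (r : α → α → Prop) [DecidableRel r] (l : List α) : Finset α :=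
  {x | x ∉ l.toFinset ∧ (∃ y ∈ l, r y x) ∧ ∃ y ∈ l, r x y}

theorem card_hybrids_add_card_filter_rel_last_le (hT : IsTournament r) (hl : IsDirPath r l)
    (hne : ¬ Extendable r l) (ha : l.head? = some a) (hz : l.getLast? = some z) :
    #(hybrids r l) + #{x | x ∉ l.toFinset ∧ r x z} ≤ #{x | x ∉ l.toFinset ∧ r x a} := by
  rw [← card_union_of_disjoint]
  · refine card_le_card fun x hx => ?_
    simp only [hybrids, mem_union, mem_filter, mem_univ, true_and, List.mem_toFinset] at hx ⊢
    rcases hx with ⟨hxl, -, y, hy, hxy⟩ | ⟨hxl, hxz⟩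
    · exact ⟨hxl, rel_head_of_not_extendable hT hl hne ha hxl hy hxy⟩
    · exact ⟨hxl, rel_head_of_not_extendable hT hl hne ha hxl (List.mem_of_getLast? hz) hxz⟩
  · refine disjoint_filter.2 fun x _ hx hxz => ?_
    obtain ⟨hxl, ⟨y, hy, hyx⟩, -⟩ := hx
    exact hT.asymm hxz.2 (rel_last_of_not_extendable hT hl hne hz (by simpa using hxl) hy hyx)

theorem card_hybrids_add_card_filter_head_rel_le (hT : IsTournament r) (hl : IsDirPath r l)
    (hne : ¬ Extendable r l) (ha : l.head? = some a) (hz : l.getLast? = some z) :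
    #(hybrids r l) + #{x | x ∉ l.toFinset ∧ r a x} ≤ #{x | x ∉ l.toFinset ∧ r z x} := by
  rw [← card_union_of_disjoint]
  · refine card_le_card fun x hx => ?_
    simp only [hybrids, mem_union, mem_filter, mem_univ, true_and, List.mem_toFinset] at hx ⊢
    rcases hx with ⟨hxl, ⟨y, hy, hyx⟩, -⟩ | ⟨hxl, hax⟩
    · exact ⟨hxl, rel_last_of_not_extendable hT hl hne hz hxl hy hyx⟩
    · exact ⟨hxl, rel_last_of_not_extendable hT hl hne hz hxl (List.mem_of_head? ha) hax⟩
  · refine disjoint_filter.2 fun x _ hx hax => ?_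
    obtain ⟨hxl, -, y, hy, hxy⟩ := hx
    exact hT.asymm hax.2 (rel_head_of_not_extendable hT hl hne ha (by simpa using hxl) hy hxy)

end NonExtendable

section Counting

variable {α : Type*}

theorem card_filter_eq_card_filter_notMem_add [Fintype α] [DecidableEq α] {ι : Type*}
    [Fintype ι] {u : ι → α} (hu : Injective u) {l : List α} (hl : ∀ x, x ∈ l ↔ ∃ q, u q = x)
    (P : α → Prop) [DecidablePred P] :
    #{x | P x} = #{x | x ∉ l.toFinset ∧ P x} + #{q | P (u q)} := by
  rw [← card_filter_add_card_filter_not (s := {x | P x}) (· ∉ l.toFinset), filter_filter,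
    filter_filter, ← card_image_of_injective _ hu]
  congr 2
  · ext x; simp [and_comm]
  · ext x
    simp only [mem_filter, mem_univ, true_and, mem_image, not_not, List.mem_toFinset, hl]
    constructor
    · rintro ⟨hx, q, rfl⟩
      exact ⟨q, hx, rfl⟩
    · rintro ⟨q, hq, rfl⟩
      exact ⟨hq, q, rfl⟩

/-- The left side is `∑ j : Fin n, ([u 0 → u (j + 1)] + [u j → u n])`, and a summand exceeds `1`
only for `j = 0` or `j = n - 1`. -/
theorem card_filter_head_rel_add_card_filter_rel_last_le {r : α → α → Prop} [DecidableRel r]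
    (hirr : ∀ v, ¬ r v v) {n : ℕ} (u : Fin (n + 1) → α)
    (hcross : ∀ j : Fin n, 0 < (j : ℕ) → (j : ℕ) + 1 < n →
      r (u 0) (u j.succ) → ¬ r (u j.castSucc) (u (Fin.last n))) :
    #{q | r (u 0) (u q)} + #{q | r (u q) (u (Fin.last n))} ≤ n + 2 := by
  rw [card_filter, card_filter, Fin.sum_univ_succ, Fin.sum_univ_castSucc]
  simp only [hirr, if_false, zero_add, add_zero, ← sum_add_distrib]
  calc _ ≤ ∑ j : Fin n, (1 + ((if (j : ℕ) = 0 then 1 else 0) + if (j : ℕ) = n - 1 then 1 else 0)) :=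
        sum_le_sum fun j _ => by
          by_cases hj : (j : ℕ) = 0 ∨ (j : ℕ) = n - 1
          · split_ifs <;> omega
          · have := hcross j (by omega) (by omega)
            split_ifs <;> simp_all
    _ ≤ n + 2 := by
      rw [sum_add_distrib, sum_add_distrib,
        Fin.sum_univ_eq_sum_range (fun i => if i = 0 then 1 else 0),
        Fin.sum_univ_eq_sum_range (fun i => if i = n - 1 then 1 else 0), sum_ite_eq', sum_ite_eq']
      simp only [sum_const, card_univ, Fintype.card_fin, smul_eq_mul, mul_one]
      split_ifs <;> omega

theorem two_mul_card_hybrids_add_le [Fintype α] [DecidableEq α] {r : α → α → Prop}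
    [DecidableRel r] (hT : IsTournament r) {l : List α} (hl : IsDirPath r l)
    (hne : ¬ Extendable r l) {a z : α} (ha : l.head? = some a) (hz : l.getLast? = some z)
    {ι : Type*} [Fintype ι] {u : ι → α} (hu : Injective u) (hmem : ∀ x, x ∈ l ↔ ∃ q, u q = x) :
    2 * (#(hybrids r l) : ℤ) + (#{q | r (u q) a} - #{q | r a (u q)})
      + (#{q | r z (u q)} - #{q | r (u q) z})
      ≤ ((inDeg r a : ℤ) - outDeg r a) + ((outDeg r z : ℤ) - inDeg r z) := by
  have hout₀ : outDeg r a = _ := card_filter_eq_card_filter_notMem_add hu hmem _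
  have hin₀ : inDeg r a = _ := card_filter_eq_card_filter_notMem_add hu hmem _
  have hout₁ : outDeg r z = _ := card_filter_eq_card_filter_notMem_add hu hmem _
  have hin₁ : inDeg r z = _ := card_filter_eq_card_filter_notMem_add hu hmem _
  have := card_hybrids_add_card_filter_rel_last_le hT hl hne ha hz
  have := card_hybrids_add_card_filter_head_rel_le hT hl hne ha hz
  omega

end Counting

theorem stmt10_general (r : V → V → Prop) [DecidableRel r] (hT : IsTournament r)
    (i : ℕ) (hi : IsIrreg r i)
    (l : List V) (hl : IsDirPath r l) (hne : ¬ Extendable r l)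
    (w : V) (hw : w ∉ l.toFinset) (k : ℕ) (hk1 : 1 ≤ k) (hk2 : k ≤ l.length - 3)
    (hdomw : ∀ j (hj : j < l.length), k + 1 ≤ j → j ≤ l.length - 2 →
      r (l.get ⟨j, hj⟩) w)
    (hwdom : ∀ j (hj : j < l.length), 1 ≤ j → j ≤ k → r w (l.get ⟨j, hj⟩)) :
    (Finset.univ.filter fun x => x ∉ l.toFinset ∧
      (∃ y ∈ l, r y x) ∧ (∃ y ∈ l, r x y)).card ≤ i + 2 := by
  obtain _ | ⟨a, t⟩ := l
  · simp at hk2; omega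
  simp only [List.length_cons] at hk2
  let u : Fin (t.length + 1) → V := (a :: t).get
  have hu : Injective u := List.nodup_iff_injective_get.1 hl.1
  have hz : (a :: t).getLast? = some (u (Fin.last t.length)) := by
    simp [u, List.getLast?_eq_getElem?]
  have hpath := card_filter_head_rel_add_card_filter_rel_last_le hT.1 u
    fun j hj hjn h₁ h₂ => hne <| extendable_of_cross hl (by simpa using hw) hj (by simp; omega)
      (by simpa using hwdom 1 (by simp; omega) le_rfl hk1)
      (by simpa using hdomw ((a :: t).length - 2) (by simp) (by simp; omega) le_rfl)
      (by simpa [u] using h₁) (by simpa [u] using h₂)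
  have hout := two_mul_card_hybrids_add_le hT hl hne (a := u 0) rfl hz hu fun x => List.mem_iff_get
  have hsplit₀ := hT.card_filter_rel_add_card_filter_rel hu 0
  have hsplit₁ := hT.card_filter_rel_add_card_filter_rel hu (Fin.last _)
  rw [Fintype.card_fin] at hsplit₀ hsplit₁
  have hirr₀ := hi.1 (u 0)
  have hirr₁ := hi.1 (u (Fin.last _))
  change #(hybrids r (a :: t)) ≤ i + 2
  omega

theorem stmt10 (r : V → V → Prop) [DecidableRel r] (hT : IsTournament r)
    (i : ℕ) (hi : IsIrreg r i)
    (l : List V) (hp : 4 ≤ l.length) (hl : IsDirPath r l) (hne : ¬ Extendable r l)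
    (w : V) (hw : w ∉ l.toFinset) (k : ℕ) (hk1 : 1 ≤ k) (hk2 : k ≤ l.length - 3)
    (hdomw : ∀ j (hj : j < l.length), k + 1 ≤ j → j ≤ l.length - 2 →
      r (l.get ⟨j, hj⟩) w)
    (hwdom : ∀ j (hj : j < l.length), 1 ≤ j → j ≤ k → r w (l.get ⟨j, hj⟩)) :
    (Finset.univ.filter fun x => x ∉ l.toFinset ∧
      (∃ y ∈ l, r y x) ∧ (∃ y ∈ l, r x y)).card ≤ i + 2 :=
  stmt10_general r hT i hi l hl hne w hw k hk1 hk2 hdomw hwdom
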